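/- Let 0 < s < ∞, C > 0, Q₀ a dyadic interval, and f locally s-integrable. The union of all maximal dyadic intervals Q ⊆ Q₀ satisfying ((1/|Q|)∫|f|^s χ̃_Q^M dx)^{1/s} > C·((1/|Q₀|)∫|f|^s χ̃_{Q₀}^{M-1} dx)^{1/s} has total measure at most C' C^{-s} |Q₀|, where C' depends only on s and M. In particular, choosing C large enough, this union has measure at most |Q₀|/2. -/

import Mathlib

open MeasureTheory Set
open scoped ENNReal NNReal

/-- A dyadic interval `[n 2^k, (n+1) 2^k)` in `ℝ`. -/
structure DyadicInterval where
  k : ℤ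
  n : ℤ

def DyadicInterval.toSet (I : DyadicInterval) : Set ℝ :=
  Set.Ico ((I.n : ℝ) * 2 ^ I.k) (((I.n : ℝ) + 1) * 2 ^ I.k)

/-- The `L^∞`-adapted bump `χ̃_I(x) = (1 + dist(x,I)/|I|)^{-100}`. -/
noncomputable def chiI (I : DyadicInterval) (x : ℝ) : ℝ :=
  (1 + Metric.infDist x I.toSet / (2 : ℝ) ^ I.k) ^ (-(100 : ℝ))

/-- The weighted `L^s` average `((1/|I|) ∫ |f|^s χ̃_I^m dx)^{1/s}`. -/
noncomputable def ave (I : DyadicInterval) (m : ℕ) (s : ℝ) (f : ℝ → ℝ) : ℝ≥0∞ :=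
  ((volume I.toSet)⁻¹ *
    ∫⁻ x, (ENNReal.ofReal |f x|) ^ s * ENNReal.ofReal (chiI I x ^ m)) ^ (1 / s)

/-- The stopping condition: `Q ⊆ Q₀` and the `L^s` average of `f` over `Q` (with bump
`χ̃_Q^M`) exceeds `C` times the one over `Q₀` (with bump `χ̃_{Q₀}^{M-1}`). -/
def stopCond (s : ℝ) (M : ℕ) (C : ℝ) (Q₀ : DyadicInterval) (f : ℝ → ℝ)
    (Q : DyadicInterval) : Prop :=
  Q.toSet ⊆ Q₀.toSet ∧
    ENNReal.ofReal C * ave Q₀ (M - 1) s f < ave Q M s f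

/-- `Q` is a maximal dyadic interval satisfying the stopping condition. -/
def selected (s : ℝ) (M : ℕ) (C : ℝ) (Q₀ : DyadicInterval) (f : ℝ → ℝ)
    (Q : DyadicInterval) : Prop :=
  stopCond s M C Q₀ f Q ∧
    ∀ Q' : DyadicInterval, stopCond s M C Q₀ f Q' → Q.toSet ⊆ Q'.toSet → Q' = Q

/-!
Put `g = |f|^s χ̃_{Q₀}^{M-1}` and `t = C^s |Q₀|⁻¹ ∫ g`. For `Q ⊆ Q₀` we have
`χ̃_Q^M ≤ χ̃_Q χ̃_{Q₀}^{M-1}`, so every stopping interval satisfies `t |Q| < ∫ χ̃_Q g`.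
Dominating `χ̃_Q` by `∑ⱼ 4^{-j} 1_{3Q⁽ʲ⁺¹⁾}`, where `Q⁽ʲ⁾` is the dyadic ancestor of length
`2^j |Q|`, and pigeonholing over `j` and over the three dyadic intervals making up `3Q⁽ʲ⁺¹⁾`
gives a dyadic `R` with `Q ⊆ 3R` and `t |R| ≤ 12 ∫_R g`. Such heavy intervals have bounded
length, so each lies in a maximal one, and the maximal ones are disjoint. Hence the union has
measure at most `3 ∑ |R| ≤ 36 t⁻¹ ∫ g = 36 C^{-s} |Q₀|`: this dyadic covering argument replaces
the weak-type bound for the maximal function.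
-/

lemma mem_Ioo_of_infDist_Ico_lt {a b r x : ℝ} (hab : a < b) (h : Metric.infDist x (Ico a b) < r) :
    x ∈ Ioo (a - r) (b + r) := by
  obtain ⟨y, ⟨hay, hyb⟩, hxy⟩ := (Metric.infDist_lt_iff (nonempty_Ico.2 hab)).1 h
  obtain ⟨h₁, h₂⟩ := abs_lt.1 (Real.dist_eq x y ▸ hxy)
  constructor <;> linarith

lemma rpow_neg_le_inv_of_rpow_inv_le {a s C : ℝ} (ha : 0 < a) (hs : 0 < s) (h : a ^ s⁻¹ ≤ C) :
    C ^ (-s) ≤ a⁻¹ := by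
  have has : 0 < a ^ s⁻¹ := by positivity
  rw [Real.rpow_neg (has.le.trans h)]
  refine inv_anti₀ ha ?_
  calc a = (a ^ s⁻¹) ^ s := (Real.rpow_inv_rpow ha.le hs.ne').symm
    _ ≤ C ^ s := Real.rpow_le_rpow has.le h hs.le

lemma exists_inv_two_pow_succ_mul_lt_of_lt_tsum {x : ℝ≥0∞} {a : ℕ → ℝ≥0∞}
    (h : x < ∑' j, a j) : ∃ j, 2⁻¹ ^ (j + 1) * x < a j := by
  by_contra! hle
  refine (ENNReal.tsum_le_tsum hle).not_gt (lt_of_eq_of_lt ?_ h)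
  rw [ENNReal.tsum_mul_right, ENNReal.tsum_geometric_add_one, ENNReal.one_sub_inv_two, inv_inv,
    ENNReal.inv_mul_cancel two_ne_zero ENNReal.ofNat_ne_top, one_mul]

lemma two_pow_succ_mul_le_four_mul {x y : ℝ≥0∞} {j : ℕ} (h : 2⁻¹ ^ (j + 1) * x ≤ 4⁻¹ ^ j * y) :
    2 ^ (j + 1) * x ≤ 4 * y := by
  have h4 : (4 : ℝ≥0∞) * 4⁻¹ = 1 := ENNReal.mul_inv_cancel four_ne_zero ENNReal.ofNat_ne_top
  calc 2 ^ (j + 1) * x = 4 ^ (j + 1) * (2⁻¹ ^ (j + 1) * x) := by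
        rw [← mul_assoc, ← mul_pow, show (4 : ℝ≥0∞) = 2 * 2 by norm_num, mul_assoc,
          ENNReal.mul_inv_cancel two_ne_zero ENNReal.ofNat_ne_top, mul_one]
    _ ≤ 4 ^ (j + 1) * (4⁻¹ ^ j * y) := mul_le_mul_right h _
    _ = 4 * y := by rw [pow_succ', mul_assoc, ← mul_assoc (4 ^ j), ← mul_pow, h4, one_pow, one_mul]

namespace DyadicInterval

instance : Countable DyadicInterval :=
  Function.Injective.countable (f := fun I : DyadicInterval => (I.k, I.n))
    fun ⟨_, _⟩ ⟨_, _⟩ h => by simpa using h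

lemma two_zpow_pos (I : DyadicInterval) : (0 : ℝ) < 2 ^ I.k := zpow_pos two_pos _

lemma left_lt_right (I : DyadicInterval) : (I.n : ℝ) * 2 ^ I.k < (I.n + 1) * 2 ^ I.k := by
  nlinarith [I.two_zpow_pos]

lemma toSet_nonempty (I : DyadicInterval) : I.toSet.Nonempty := nonempty_Ico.2 I.left_lt_right

lemma measurableSet_toSet (I : DyadicInterval) : MeasurableSet I.toSet := measurableSet_Ico

lemma volume_toSet (I : DyadicInterval) : volume I.toSet = ENNReal.ofReal (2 ^ I.k) := by
  rw [toSet, Real.volume_Ico]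
  ring_nf

lemma volume_toSet_ne_zero (I : DyadicInterval) : volume I.toSet ≠ 0 := by
  simpa [volume_toSet] using I.two_zpow_pos

lemma volume_toSet_ne_top (I : DyadicInterval) : volume I.toSet ≠ ∞ := by
  simp [volume_toSet]

lemma toSet_subset_iff {I J : DyadicInterval} : I.toSet ⊆ J.toSet ↔
    (J.n : ℝ) * 2 ^ J.k ≤ I.n * 2 ^ I.k ∧ (I.n + 1 : ℝ) * 2 ^ I.k ≤ (J.n + 1) * 2 ^ J.k :=
  Ico_subset_Ico_iff I.left_lt_right

lemma two_zpow_le_of_subset {I J : DyadicInterval} (h : I.toSet ⊆ J.toSet) :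
    (2 : ℝ) ^ I.k ≤ 2 ^ J.k := by
  have := measure_mono (μ := volume) h
  rwa [volume_toSet, volume_toSet, ENNReal.ofReal_le_ofReal_iff J.two_zpow_pos.le] at this

lemma k_le_of_subset {I J : DyadicInterval} (h : I.toSet ⊆ J.toSet) : I.k ≤ J.k :=
  (zpow_le_zpow_iff_right₀ one_lt_two).1 (two_zpow_le_of_subset h)

lemma n_eq_floor {I : DyadicInterval} {x : ℝ} (hx : x ∈ I.toSet) : I.n = ⌊x / 2 ^ I.k⌋ := by
  obtain ⟨h₁, h₂⟩ := hx
  symm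
  rw [Int.floor_eq_iff, le_div_iff₀ I.two_zpow_pos, div_lt_iff₀ I.two_zpow_pos]
  exact ⟨h₁, h₂⟩

lemma eq_of_k_eq_of_mem {I J : DyadicInterval} (hk : I.k = J.k) {x : ℝ} (hI : x ∈ I.toSet)
    (hJ : x ∈ J.toSet) : I = J := by
  have hn : I.n = J.n := by rw [n_eq_floor hI, n_eq_floor hJ, hk]
  cases I; cases J
  simp_all

-- `Int` division is Euclidean: here it rounds down, as `2 ^ j > 0`.
def ancestor (I : DyadicInterval) (j : ℕ) : DyadicInterval := ⟨I.k + j, I.n / 2 ^ j⟩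

lemma two_zpow_ancestor (I : DyadicInterval) (j : ℕ) :
    (2 : ℝ) ^ (I.ancestor j).k = 2 ^ j * 2 ^ I.k := by
  rw [ancestor, zpow_add₀ two_ne_zero, zpow_natCast, mul_comm]

lemma volume_ancestor (I : DyadicInterval) (j : ℕ) :
    volume (I.ancestor j).toSet = 2 ^ j * volume I.toSet := by
  rw [volume_toSet, volume_toSet, two_zpow_ancestor, ENNReal.ofReal_mul (by positivity),
    ENNReal.ofReal_pow zero_le_two, ENNReal.ofReal_ofNat]

lemma subset_ancestor (I : DyadicInterval) (j : ℕ) : I.toSet ⊆ (I.ancestor j).toSet := by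
  have h2j : (0 : ℤ) < 2 ^ j := by positivity
  have hlo : ((I.n / 2 ^ j : ℤ) : ℝ) * 2 ^ j ≤ I.n := by
    exact_mod_cast Int.ediv_mul_le I.n h2j.ne'
  have hhi : (I.n + 1 : ℝ) ≤ ((I.n / 2 ^ j : ℤ) + 1 : ℝ) * 2 ^ j := by
    exact_mod_cast Int.lt_ediv_add_one_mul_self I.n h2j
  rw [toSet_subset_iff, two_zpow_ancestor]
  have := I.two_zpow_pos
  constructor <;> simp only [ancestor] <;> nlinarith

lemma subset_of_k_le_of_mem {I J : DyadicInterval} (hk : I.k ≤ J.k) {x : ℝ} (hI : x ∈ I.toSet)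
    (hJ : x ∈ J.toSet) : I.toSet ⊆ J.toSet := by
  obtain ⟨j, hj⟩ := Int.le.dest hk
  have hA : I.ancestor j = J := eq_of_k_eq_of_mem hj (I.subset_ancestor j hI) hJ
  exact hA ▸ I.subset_ancestor j

def shift (I : DyadicInterval) (i : ℤ) : DyadicInterval := ⟨I.k, I.n + i⟩

@[simp]
lemma shift_zero (I : DyadicInterval) : I.shift 0 = I := by
  simp [shift]

lemma volume_shift (I : DyadicInterval) (i : ℤ) : volume (I.shift i).toSet = volume I.toSet := by
  simp only [volume_toSet, shift]

def triple (I : DyadicInterval) : Set ℝ := Ico ((I.n - 1 : ℝ) * 2 ^ I.k) ((I.n + 2 : ℝ) * 2 ^ I.k)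

lemma triple_eq_union (I : DyadicInterval) :
    I.triple = (I.shift (-1)).toSet ∪ I.toSet ∪ (I.shift 1).toSet := by
  have := I.two_zpow_pos
  simp only [triple, toSet, shift, Int.cast_add, Int.cast_neg, Int.cast_one]
  rw [neg_add_cancel_right, Ico_union_Ico_eq_Ico (by nlinarith) (by nlinarith),
    Ico_union_Ico_eq_Ico (by nlinarith) (by nlinarith)]
  ring_nf

lemma volume_triple (I : DyadicInterval) : volume I.triple = 3 * volume I.toSet := by
  rw [triple, Real.volume_Ico, volume_toSet, ← ENNReal.ofReal_ofNat 3,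
    ← ENNReal.ofReal_mul zero_le_three]
  ring_nf

lemma toSet_subset_triple_shift (I : DyadicInterval) {i : ℤ} (hi : |i| ≤ 1) :
    I.toSet ⊆ (I.shift i).triple := by
  have hi' : (-1 : ℝ) ≤ i ∧ (i : ℝ) ≤ 1 := by exact_mod_cast abs_le.1 hi
  have := I.two_zpow_pos
  refine Ico_subset_Ico ?_ ?_ <;> simp only [shift, Int.cast_add] <;> nlinarith

lemma triple_mono {I J : DyadicInterval} (h : I.toSet ⊆ J.toSet) : I.triple ⊆ J.triple := by
  obtain ⟨hl, hr⟩ := toSet_subset_iff.1 h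
  have := two_zpow_le_of_subset h
  exact Ico_subset_Ico (by linarith) (by linarith)

lemma mem_triple_ancestor {I : DyadicInterval} {j : ℕ} {x : ℝ}
    (h : Metric.infDist x I.toSet < (2 ^ j - 1) * 2 ^ I.k) : x ∈ (I.ancestor j).triple := by
  obtain ⟨hl, hr⟩ := toSet_subset_iff.1 (I.subset_ancestor j)
  obtain ⟨hxl, hxr⟩ := mem_Ioo_of_infDist_Ico_lt I.left_lt_right h
  rw [two_zpow_ancestor] at hl hr
  have := I.two_zpow_pos
  constructor <;> rw [two_zpow_ancestor] <;> linarith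


lemma exists_lintegral_triple_le (I : DyadicInterval) (g : ℝ → ℝ≥0∞) :
    ∃ i : ℤ, |i| ≤ 1 ∧ ∫⁻ x in I.triple, g x ≤ 3 * ∫⁻ x in (I.shift i).toSet, g x := by
  set a : ℤ → ℝ≥0∞ := fun i => ∫⁻ x in (I.shift i).toSet, g x
  obtain ⟨i, hi, hmax⟩ := (Finset.Icc (-1 : ℤ) 1).exists_max_image a ⟨0, by simp⟩
  refine ⟨i, abs_le.2 (Finset.mem_Icc.1 hi), ?_⟩
  calc ∫⁻ x in I.triple, g x ≤ a (-1) + a 0 + a 1 := by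
        rw [triple_eq_union]
        simp only [a, shift_zero]
        exact (lintegral_union_le _ _ _).trans (add_le_add_left (lintegral_union_le _ _ _) _)
    _ ≤ a i + a i + a i := by gcongr <;> exact hmax _ (by simp)
    _ = 3 * a i := by ring

def IsMaximal (P : DyadicInterval → Prop) (I : DyadicInterval) : Prop :=
  P I ∧ ∀ J, P J → I.toSet ⊆ J.toSet → J = I

lemma exists_isMaximal_superset {P : DyadicInterval → Prop} {N : ℤ} (hN : ∀ J, P J → J.k ≤ N)
    {I : DyadicInterval} (hI : P I) : ∃ J, IsMaximal P J ∧ I.toSet ⊆ J.toSet := by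
  obtain ⟨κ, ⟨J, rfl, hJ, hIJ⟩, hgreatest⟩ :=
    Int.exists_greatest_of_bdd (P := fun z => ∃ J, J.k = z ∧ P J ∧ I.toSet ⊆ J.toSet)
      ⟨N, fun _ ⟨J, hz, hJ, _⟩ => hz ▸ hN J hJ⟩ ⟨I.k, I, rfl, hI, subset_rfl⟩
  refine ⟨J, ⟨hJ, fun J' hJ' hJJ' => ?_⟩, hIJ⟩
  have hk : J'.k = J.k :=
    le_antisymm (hgreatest _ ⟨J', rfl, hJ', hIJ.trans hJJ'⟩) (k_le_of_subset hJJ')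
  obtain ⟨x, hx⟩ := J.toSet_nonempty
  exact eq_of_k_eq_of_mem hk (hJJ' hx) hx

lemma IsMaximal.disjoint {P : DyadicInterval → Prop} {I J : DyadicInterval} (hI : IsMaximal P I)
    (hJ : IsMaximal P J) (hne : I ≠ J) : Disjoint I.toSet J.toSet := by
  refine disjoint_left.2 fun x hxI hxJ => hne ?_
  rcases le_total I.k J.k with hk | hk
  · exact (hI.2 J hJ.1 (subset_of_k_le_of_mem hk hxI hxJ)).symm
  · exact hJ.2 I hI.1 (subset_of_k_le_of_mem hk hxJ hxI)

end DyadicInterval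

open DyadicInterval

lemma one_le_add_infDist_div (I : DyadicInterval) (x : ℝ) :
    1 ≤ 1 + Metric.infDist x I.toSet / 2 ^ I.k :=
  le_add_of_nonneg_right (div_nonneg Metric.infDist_nonneg I.two_zpow_pos.le)

lemma chiI_nonneg (I : DyadicInterval) (x : ℝ) : 0 ≤ chiI I x :=
  Real.rpow_nonneg (zero_le_one.trans (one_le_add_infDist_div I x)) _

lemma chiI_le_one (I : DyadicInterval) (x : ℝ) : chiI I x ≤ 1 :=
  Real.rpow_le_one_of_one_le_of_nonpos (one_le_add_infDist_div I x) (by norm_num)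

lemma chiI_mono {I J : DyadicInterval} (h : I.toSet ⊆ J.toSet) (x : ℝ) : chiI I x ≤ chiI J x := by
  have hdist : Metric.infDist x J.toSet ≤ Metric.infDist x I.toSet :=
    Metric.infDist_le_infDist_of_subset h I.toSet_nonempty
  refine Real.rpow_le_rpow_of_nonpos (zero_lt_one.trans_le (one_le_add_infDist_div J x)) ?_
    (by norm_num)
  exact add_le_add_right
    (div_le_div₀ Metric.infDist_nonneg hdist I.two_zpow_pos (two_zpow_le_of_subset h)) 1

lemma measurable_chiI (I : DyadicInterval) : Measurable (chiI I) :=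
  (measurable_const.add ((Metric.continuous_infDist_pt _).measurable.div_const _)).pow_const _

lemma chiI_le_inv_four_pow {I : DyadicInterval} {x : ℝ} {j : ℕ}
    (h : (2 : ℝ) ^ j ≤ 1 + Metric.infDist x I.toSet / 2 ^ I.k) : chiI I x ≤ 4⁻¹ ^ j := by
  have h2j : (1 : ℝ) ≤ 2 ^ j := one_le_pow₀ one_le_two
  calc chiI I x ≤ ((2 : ℝ) ^ j) ^ (-(100 : ℝ)) :=
        Real.rpow_le_rpow_of_nonpos (by positivity) h (by norm_num)
    _ ≤ ((2 : ℝ) ^ j) ^ (-(2 : ℝ)) := Real.rpow_le_rpow_of_exponent_le h2j (by norm_num)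
    _ = 4⁻¹ ^ j := by
        rw [Real.rpow_neg (by positivity), Real.rpow_two, ← pow_mul, inv_pow, mul_comm, pow_mul]
        norm_num

lemma ofReal_chiI_le_tsum (I : DyadicInterval) (x : ℝ) :
    ENNReal.ofReal (chiI I x) ≤
      ∑' j : ℕ, (I.ancestor (j + 1)).triple.indicator (fun _ => (4 : ℝ≥0∞)⁻¹ ^ j) x := by
  have hd : 0 ≤ Metric.infDist x I.toSet / 2 ^ I.k :=
    div_nonneg Metric.infDist_nonneg I.two_zpow_pos.le
  obtain ⟨j, hj, hj'⟩ := exists_nat_pow_near (le_add_of_nonneg_right hd) one_lt_two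
  have hx : x ∈ (I.ancestor (j + 1)).triple := by
    refine mem_triple_ancestor ?_
    rwa [← div_lt_iff₀ I.two_zpow_pos, lt_sub_iff_add_lt']
  calc ENNReal.ofReal (chiI I x) ≤ ENNReal.ofReal (4⁻¹ ^ j) :=
        ENNReal.ofReal_le_ofReal (chiI_le_inv_four_pow hj)
    _ = (I.ancestor (j + 1)).triple.indicator (fun _ => (4 : ℝ≥0∞)⁻¹ ^ j) x := by
        rw [indicator_of_mem hx, ENNReal.ofReal_pow (by norm_num),
          ENNReal.ofReal_inv_of_pos (by norm_num), ENNReal.ofReal_ofNat]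
    _ ≤ _ := ENNReal.le_tsum j

lemma lintegral_ofReal_chiI_mul_le {g : ℝ → ℝ≥0∞} (hg : AEMeasurable g) (I : DyadicInterval) :
    ∫⁻ x, ENNReal.ofReal (chiI I x) * g x ≤
      ∑' j : ℕ, 4⁻¹ ^ j * ∫⁻ x in (I.ancestor (j + 1)).triple, g x := by
  have hmeas (j : ℕ) : MeasurableSet (I.ancestor (j + 1)).triple := measurableSet_Ico
  calc ∫⁻ x, ENNReal.ofReal (chiI I x) * g x
      ≤ ∫⁻ x, ∑' j : ℕ, (I.ancestor (j + 1)).triple.indicator (fun y => 4⁻¹ ^ j * g y) x := by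
        refine lintegral_mono fun x => ?_
        simp only [indicator_mul_left, ENNReal.tsum_mul_right]
        exact mul_le_mul_left (ofReal_chiI_le_tsum I x) _
    _ = ∑' j : ℕ, 4⁻¹ ^ j * ∫⁻ x in (I.ancestor (j + 1)).triple, g x := by
        rw [lintegral_tsum fun j => (hg.const_mul _).indicator (hmeas j)]
        simp only [lintegral_indicator (hmeas _),
          lintegral_const_mul' _ _ (ENNReal.pow_ne_top (ENNReal.inv_ne_top.2 four_ne_zero))]

def IsHeavy (g : ℝ → ℝ≥0∞) (t : ℝ≥0∞) (R : DyadicInterval) : Prop :=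
  t * volume R.toSet ≤ ∫⁻ x in R.toSet, g x

lemma exists_isHeavy_of_lt_lintegral {g : ℝ → ℝ≥0∞} (hg : AEMeasurable g) {t : ℝ≥0∞}
    {Q : DyadicInterval} (h : volume Q.toSet * t < ∫⁻ x, ENNReal.ofReal (chiI Q x) * g x) :
    ∃ R, IsHeavy g (12⁻¹ * t) R ∧ Q.toSet ⊆ R.triple := by
  obtain ⟨j, hj⟩ :=
    exists_inv_two_pow_succ_mul_lt_of_lt_tsum (h.trans_le (lintegral_ofReal_chiI_mul_le hg Q))
  set P := Q.ancestor (j + 1)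
  obtain ⟨i, hi, hP⟩ := P.exists_lintegral_triple_le g
  refine ⟨P.shift i, ?_, (Q.subset_ancestor (j + 1)).trans (P.toSet_subset_triple_shift hi)⟩
  rw [IsHeavy, mul_assoc, ENNReal.inv_mul_le_iff (by norm_num) (by norm_num)]
  calc t * volume (P.shift i).toSet = 2 ^ (j + 1) * (volume Q.toSet * t) := by
        rw [volume_shift, volume_ancestor]; ring
    _ ≤ 4 * ∫⁻ x in P.triple, g x := two_pow_succ_mul_le_four_mul hj.le
    _ ≤ 4 * (3 * ∫⁻ x in (P.shift i).toSet, g x) := mul_le_mul_right hP _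
    _ = 12 * ∫⁻ x in (P.shift i).toSet, g x := by rw [← mul_assoc]; norm_num

section Heavy

variable {g : ℝ → ℝ≥0∞} {t : ℝ≥0∞}

lemma IsHeavy.volume_le {R : DyadicInterval} (h : IsHeavy g t R) (ht : t ≠ 0) (ht' : t ≠ ∞) :
    volume R.toSet ≤ t⁻¹ * ∫⁻ x in R.toSet, g x :=
  (ENNReal.mul_le_iff_le_inv ht ht').1 h

lemma exists_forall_isHeavy_k_le (ht : t ≠ 0) (ht' : t ≠ ∞) (hg : ∫⁻ x, g x ≠ ∞) :
    ∃ N : ℤ, ∀ R, IsHeavy g t R → R.k ≤ N := by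
  obtain ⟨N, hN⟩ := pow_unbounded_of_one_lt (t⁻¹ * ∫⁻ x, g x).toReal one_lt_two
  refine ⟨N, fun R hR => ?_⟩
  have hvol : ENNReal.ofReal (2 ^ R.k) ≤ t⁻¹ * ∫⁻ x, g x := by
    rw [← volume_toSet]
    exact (hR.volume_le ht ht').trans (mul_le_mul_right (setLIntegral_le_lintegral _ _) _)
  rw [ENNReal.ofReal_le_iff_le_toReal (ENNReal.mul_ne_top (ENNReal.inv_ne_top.2 ht) hg)] at hvol
  rw [← zpow_natCast] at hN
  exact ((zpow_lt_zpow_iff_right₀ one_lt_two).1 (hvol.trans_lt hN)).le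

lemma volume_iUnion_triple_isHeavy_le (ht : t ≠ 0) (ht' : t ≠ ∞) (hg : ∫⁻ x, g x ≠ ∞) :
    volume (⋃ R, ⋃ _ : IsHeavy g t R, R.triple) ≤ 3 * t⁻¹ * ∫⁻ x, g x := by
  obtain ⟨N, hN⟩ := exists_forall_isHeavy_k_le ht ht' hg
  have hcover : (⋃ R, ⋃ _ : IsHeavy g t R, R.triple) ⊆
      ⋃ R : {R // IsMaximal (IsHeavy g t) R}, R.1.triple := by
    simp only [iUnion_subset_iff]
    intro R hR
    obtain ⟨J, hJ, hRJ⟩ := exists_isMaximal_superset hN hR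
    exact (triple_mono hRJ).trans
      (subset_iUnion (fun R : {R // IsMaximal (IsHeavy g t) R} => R.1.triple) ⟨J, hJ⟩)
  have hdisj : Pairwise
      (Function.onFun Disjoint fun R : {R // IsMaximal (IsHeavy g t) R} => R.1.toSet) :=
    fun R R' hne => R.2.disjoint R'.2 (Subtype.coe_ne_coe.2 hne)
  calc volume (⋃ R, ⋃ _ : IsHeavy g t R, R.triple)
      ≤ ∑' R : {R // IsMaximal (IsHeavy g t) R}, volume R.1.triple :=
        (measure_mono hcover).trans (measure_iUnion_le _)
    _ ≤ ∑' R : {R // IsMaximal (IsHeavy g t) R}, 3 * t⁻¹ * ∫⁻ x in R.1.toSet, g x :=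
        ENNReal.tsum_le_tsum fun R => by
          rw [volume_triple, mul_assoc]
          exact mul_le_mul_right (R.2.1.volume_le ht ht') 3
    _ = 3 * t⁻¹ * ∫⁻ x in ⋃ R : {R // IsMaximal (IsHeavy g t) R}, R.1.toSet, g x := by
        rw [ENNReal.tsum_mul_left, lintegral_iUnion (fun R => R.1.measurableSet_toSet) hdisj]
    _ ≤ 3 * t⁻¹ * ∫⁻ x, g x := mul_le_mul_right (setLIntegral_le_lintegral _ _) _

end Heavy

noncomputable def weightedPow (I : DyadicInterval) (m : ℕ) (s : ℝ) (f : ℝ → ℝ) (x : ℝ) : ℝ≥0∞ :=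
  ENNReal.ofReal |f x| ^ s * ENNReal.ofReal (chiI I x ^ m)

noncomputable def stopThreshold (s : ℝ) (M : ℕ) (C : ℝ) (Q₀ : DyadicInterval) (f : ℝ → ℝ) :
    ℝ≥0∞ :=
  (ENNReal.ofReal C * ave Q₀ (M - 1) s f) ^ s

section StoppingIntervals

variable {s : ℝ} {M : ℕ} {C : ℝ} {Q₀ Q : DyadicInterval} {f : ℝ → ℝ}

lemma measurable_weightedPow (I : DyadicInterval) (m : ℕ) (hf : Measurable f) :
    Measurable (weightedPow I m s f) :=
  (hf.abs.ennreal_ofReal.pow_const s).mul (((measurable_chiI I).pow_const m).ennreal_ofReal)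

lemma weightedPow_le (hM : 1 ≤ M) (hQ : Q.toSet ⊆ Q₀.toSet) (x : ℝ) :
    weightedPow Q M s f x ≤ ENNReal.ofReal (chiI Q x) * weightedPow Q₀ (M - 1) s f x := by
  have hpow : chiI Q x ^ M ≤ chiI Q x * chiI Q₀ x ^ (M - 1) :=
    calc chiI Q x ^ M = chiI Q x * chiI Q x ^ (M - 1) := by rw [← pow_succ', Nat.sub_add_cancel hM]
      _ ≤ chiI Q x * chiI Q₀ x ^ (M - 1) :=
          mul_le_mul_of_nonneg_left (pow_le_pow_left₀ (chiI_nonneg Q x) (chiI_mono hQ x) _)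
            (chiI_nonneg Q x)
  rw [weightedPow, weightedPow, mul_left_comm, ← ENNReal.ofReal_mul (chiI_nonneg Q x)]
  exact mul_le_mul_right (ENNReal.ofReal_le_ofReal hpow) _

lemma ave_rpow (hs : s ≠ 0) (I : DyadicInterval) (m : ℕ) :
    ave I m s f ^ s = (volume I.toSet)⁻¹ * ∫⁻ x, weightedPow I m s f x := by
  rw [ave, ← ENNReal.rpow_mul, one_div_mul_cancel hs, ENNReal.rpow_one]
  rfl

lemma stopThreshold_eq (hs : 0 < s) (hC : 0 ≤ C) :
    stopThreshold s M C Q₀ f =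
      ENNReal.ofReal (C ^ s) * ((volume Q₀.toSet)⁻¹ * ∫⁻ x, weightedPow Q₀ (M - 1) s f x) := by
  rw [stopThreshold, ENNReal.mul_rpow_of_nonneg _ _ hs.le, ENNReal.ofReal_rpow_of_nonneg hC hs.le,
    ave_rpow hs.ne']

lemma stopCond.volume_mul_stopThreshold_lt (h : stopCond s M C Q₀ f Q) (hs : 0 < s)
    (hM : 1 ≤ M) :
    volume Q.toSet * stopThreshold s M C Q₀ f <
      ∫⁻ x, ENNReal.ofReal (chiI Q x) * weightedPow Q₀ (M - 1) s f x := by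
  have hlt : stopThreshold s M C Q₀ f < (volume Q.toSet)⁻¹ * ∫⁻ x, weightedPow Q M s f x :=
    ave_rpow hs.ne' Q M ▸ ENNReal.rpow_lt_rpow h.2 hs
  calc _ < volume Q.toSet * ((volume Q.toSet)⁻¹ * ∫⁻ x, weightedPow Q M s f x) :=
        (ENNReal.mul_lt_mul_iff_right Q.volume_toSet_ne_zero Q.volume_toSet_ne_top).2 hlt
    _ = ∫⁻ x, weightedPow Q M s f x := by
        rw [← mul_assoc, ENNReal.mul_inv_cancel Q.volume_toSet_ne_zero Q.volume_toSet_ne_top,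
          one_mul]
    _ ≤ _ := lintegral_mono (weightedPow_le hM h.1)

lemma stopCond.lintegral_weightedPow_ne_zero (h : stopCond s M C Q₀ f Q) (hs : 0 < s)
    (hM : 1 ≤ M) : ∫⁻ x, weightedPow Q₀ (M - 1) s f x ≠ 0 := by
  refine ne_bot_of_gt ((h.volume_mul_stopThreshold_lt hs hM).trans_le (lintegral_mono fun x => ?_))
  exact mul_le_of_le_one_left' (ENNReal.ofReal_le_one.2 (chiI_le_one Q x))

lemma stopCond.stopThreshold_ne_top (h : stopCond s M C Q₀ f Q) (hs : 0 < s) (hM : 1 ≤ M) :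
    stopThreshold s M C Q₀ f ≠ ∞ := by
  intro htop
  simpa [htop, ENNReal.mul_top Q.volume_toSet_ne_zero] using h.volume_mul_stopThreshold_lt hs hM

lemma stopCond.lintegral_weightedPow_ne_top (h : stopCond s M C Q₀ f Q) (hs : 0 < s)
    (hM : 1 ≤ M) (hC : 0 < C) : ∫⁻ x, weightedPow Q₀ (M - 1) s f x ≠ ∞ := by
  intro htop
  apply h.stopThreshold_ne_top hs hM
  simp [stopThreshold_eq hs hC.le, htop, Real.rpow_pos_of_pos hC, Q₀.volume_toSet_ne_top]

lemma stopCond.stopThreshold_ne_zero (h : stopCond s M C Q₀ f Q) (hs : 0 < s) (hM : 1 ≤ M)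
    (hC : 0 < C) : stopThreshold s M C Q₀ f ≠ 0 := by
  simp [stopThreshold_eq hs hC.le, Real.rpow_pos_of_pos hC, Q₀.volume_toSet_ne_top,
    h.lintegral_weightedPow_ne_zero hs hM]

lemma inv_stopThreshold_mul_lintegral (hs : 0 < s) (hC : 0 < C)
    (hG : ∫⁻ x, weightedPow Q₀ (M - 1) s f x ≠ 0) (hG' : ∫⁻ x, weightedPow Q₀ (M - 1) s f x ≠ ∞) :
    (stopThreshold s M C Q₀ f)⁻¹ * ∫⁻ x, weightedPow Q₀ (M - 1) s f x =
      ENNReal.ofReal (C ^ (-s)) * volume Q₀.toSet := by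
  rw [stopThreshold_eq hs hC.le, ENNReal.mul_inv
    (Or.inr (ENNReal.mul_ne_top (by simp [Q₀.volume_toSet_ne_zero]) hG'))
    (Or.inl ENNReal.ofReal_ne_top), ENNReal.mul_inv (Or.inr hG') (Or.inr hG), inv_inv, mul_assoc,
    mul_assoc, ENNReal.inv_mul_cancel hG hG', mul_one, Real.rpow_neg hC.le,
    ENNReal.ofReal_inv_of_pos (Real.rpow_pos_of_pos hC s)]

theorem volume_iUnion_stopCond_le (hs : 0 < s) (hM : 1 ≤ M) (hC : 0 < C) (hf : Measurable f) :
    volume (⋃ Q : DyadicInterval, ⋃ _ : stopCond s M C Q₀ f Q, Q.toSet) ≤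
      ENNReal.ofReal (36 * C ^ (-s)) * volume Q₀.toSet := by
  set g := weightedPow Q₀ (M - 1) s f
  set t := stopThreshold s M C Q₀ f
  rcases eq_empty_or_nonempty (⋃ Q : DyadicInterval, ⋃ _ : stopCond s M C Q₀ f Q, Q.toSet)
    with hempty | ⟨x, hx⟩
  · simp [hempty]
  obtain ⟨Q, hQ, -⟩ := mem_iUnion₂.1 hx
  have hG := hQ.lintegral_weightedPow_ne_zero hs hM
  have hG' := hQ.lintegral_weightedPow_ne_top hs hM hC
  have ht : 12⁻¹ * t ≠ 0 := mul_ne_zero (by norm_num) (hQ.stopThreshold_ne_zero hs hM hC)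
  have ht' : 12⁻¹ * t ≠ ∞ := ENNReal.mul_ne_top (by norm_num) (hQ.stopThreshold_ne_top hs hM)
  have hcover : (⋃ Q : DyadicInterval, ⋃ _ : stopCond s M C Q₀ f Q, Q.toSet) ⊆
      ⋃ R, ⋃ _ : IsHeavy g (12⁻¹ * t) R, R.triple := by
    simp only [iUnion_subset_iff]
    intro Q hQ
    obtain ⟨R, hR, hQR⟩ := exists_isHeavy_of_lt_lintegral
      (measurable_weightedPow Q₀ _ hf).aemeasurable (hQ.volume_mul_stopThreshold_lt hs hM)
    exact hQR.trans (subset_iUnion₂ (s := fun R (_ : IsHeavy g (12⁻¹ * t) R) => R.triple) R hR)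
  calc _ ≤ 3 * (12⁻¹ * t)⁻¹ * ∫⁻ x, g x :=
        (measure_mono hcover).trans (volume_iUnion_triple_isHeavy_le ht ht' hG')
    _ = 36 * (t⁻¹ * ∫⁻ x, g x) := by
        rw [ENNReal.mul_inv (by norm_num) (by norm_num), inv_inv]
        ring
    _ = ENNReal.ofReal (36 * C ^ (-s)) * volume Q₀.toSet := by
        rw [inv_stopThreshold_mul_lintegral hs hC hG hG', ← mul_assoc,
          ENNReal.ofReal_mul (by norm_num), ENNReal.ofReal_ofNat]

end StoppingIntervals

/-- The union of the maximal dyadic intervals `Q ⊆ Q₀` where the `L^s` average of `f`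
jumps above `C` times the average on `Q₀` has measure `≲ C^{-s} |Q₀|`; in particular,
for `C` large enough, measure at most `|Q₀|/2`. -/
theorem measure_of_stopping_intervals (s : ℝ) (hs : 0 < s) (M : ℕ) (hM : 1 ≤ M) :
    (∃ C' : ℝ, 0 < C' ∧
      ∀ C : ℝ, 0 < C → ∀ (Q₀ : DyadicInterval) (f : ℝ → ℝ), Measurable f →
        volume (⋃ Q : DyadicInterval, ⋃ _ : selected s M C Q₀ f Q, Q.toSet)
          ≤ ENNReal.ofReal (C' * C ^ (-s)) * volume Q₀.toSet) ∧
    (∃ C₀ : ℝ, 0 < C₀ ∧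
      ∀ C : ℝ, C₀ ≤ C → ∀ (Q₀ : DyadicInterval) (f : ℝ → ℝ), Measurable f →
        volume (⋃ Q : DyadicInterval, ⋃ _ : selected s M C Q₀ f Q, Q.toSet)
          ≤ volume Q₀.toSet / 2) := by
  have key {C : ℝ} (hC : 0 < C) (Q₀ : DyadicInterval) {f : ℝ → ℝ} (hf : Measurable f) :
      volume (⋃ Q : DyadicInterval, ⋃ _ : selected s M C Q₀ f Q, Q.toSet) ≤
        ENNReal.ofReal (36 * C ^ (-s)) * volume Q₀.toSet :=
    (measure_mono (iUnion₂_mono' fun Q hQ => ⟨Q, hQ.1, subset_rfl⟩)).trans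
      (volume_iUnion_stopCond_le hs hM hC hf)
  have h72 : (0 : ℝ) < 72 ^ s⁻¹ := by positivity
  refine ⟨⟨36, by norm_num, fun C hC Q₀ f hf => key hC Q₀ hf⟩,
    ⟨72 ^ s⁻¹, h72, fun C hC Q₀ f hf => ?_⟩⟩
  have hCs : C ^ (-s) ≤ 72⁻¹ := rpow_neg_le_inv_of_rpow_inv_le (by norm_num) hs hC
  calc _ ≤ ENNReal.ofReal (36 * C ^ (-s)) * volume Q₀.toSet :=
        key (h72.trans_le hC) Q₀ hf
    _ ≤ ENNReal.ofReal 2⁻¹ * volume Q₀.toSet := by gcongr; linarith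
    _ = volume Q₀.toSet / 2 := by
        rw [ENNReal.ofReal_inv_of_pos two_pos, ENNReal.ofReal_ofNat, ENNReal.div_eq_inv_mul]
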